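/- Let (∅,Q), (A,P) ∈ ℰ^N with ∅ ≠ A and (A,P) ⊒ (∅,Q). Then the interval [(∅,Q),(A,P)] in ℰ^N is isomorphic to the product ℰ^{|Q^A|} × [Q^{A^c}, P^{A^c}], where ℰ^{|Q^A|} is the lattice of embedded subsets of a |Q^A|-set and [Q^{A^c},P^{A^c}] is an interval in the partition lattice of A^c; consequently μ_{ℰ^N}((∅,Q),(A,P)) = μ_{ℰ^{|Q^A|}}·μ_{𝒫^{A^c}}(Q^{A^c},P^{A^c}), where μ_{ℰ^m} denotes the Möbius function of ℰ^m evaluated between its bottom and top elements. -/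

import Mathlib

open scoped BigOperators

/-- `modp n A` is the modular partition `P^A_⊥` of `Fin n` whose unique (possibly)
non-singleton block is `A`, all other blocks being singletons. -/
def modp (n : ℕ) (A : Set (Fin n)) : Setoid (Fin n) where
  r x y := x = y ∨ (x ∈ A ∧ y ∈ A)
  iseqv := by
    refine ⟨fun _ => Or.inl rfl, ?_, ?_⟩
    · rintro x y (rfl | ⟨hx, hy⟩)
      · exact Or.inl rfl
      · exact Or.inr ⟨hy, hx⟩
    · rintro x y z (rfl | ⟨hx, hy⟩) h
      · exact h
      · rcases h with rfl | ⟨hy', hz⟩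
        · exact Or.inr ⟨hx, hy⟩
        · exact Or.inr ⟨hx, hz⟩

/-- The product `X^N = 2^N × 𝒫^N` of the subset lattice and the partition lattice,
ordered componentwise. -/
abbrev XN (n : ℕ) := Set (Fin n) × Setoid (Fin n)

/-- The closure operator `cl` on `X^N`:  `cl(∅,P) = (∅,P)` and, for `A ≠ ∅`,
`cl(A,P) = (Ā, P ⊔ P^A_⊥)` where `Ā` is the block of `P ⊔ P^A_⊥` containing `A`. -/
def EmbClosure (n : ℕ) (x : XN n) : XN n :=
  ({y | ∃ a ∈ x.1, (x.2 ⊔ modp n x.1) y a}, x.2 ⊔ modp n x.1)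

/-- An embedded subset is a pair that coincides with its closure. -/
def IsEmbedded (n : ℕ) (x : XN n) : Prop := EmbClosure n x = x

/-- The lattice `ℰ^N` of embedded subsets, with the induced order. -/
abbrev Emb (n : ℕ) := {x : XN n // IsEmbedded n x}

lemma modp_le_of_subsingleton {n : ℕ} {A : Set (Fin n)} (h : A.Subsingleton)
    (Q : Setoid (Fin n)) : modp n A ≤ Q := by
  rw [Setoid.le_def]
  intro x y hxy
  rcases hxy with rfl | ⟨hx, hy⟩
  · exact Q.refl' x
  · obtain rfl := h hx hy
    exact Q.refl' x

lemma modp_eq_bot_of_subsingleton {n : ℕ} {A : Set (Fin n)} (h : A.Subsingleton) :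
    modp n A = ⊥ :=
  le_antisymm (modp_le_of_subsingleton h ⊥) bot_le

lemma embedded_empty (n : ℕ) (Q : Setoid (Fin n)) : IsEmbedded n (∅, Q) := by
  unfold IsEmbedded EmbClosure
  refine Prod.ext ?_ ?_
  · simp
  · simpa using sup_eq_left.mpr (modp_le_of_subsingleton Set.subsingleton_empty Q)

lemma embedded_univ_top (n : ℕ) : IsEmbedded n (Set.univ, ⊤) := by
  unfold IsEmbedded EmbClosure
  refine Prod.ext ?_ ?_
  · ext y
    simp only [Set.mem_setOf_eq, Set.mem_univ, iff_true]
    exact ⟨y, trivial, Setoid.refl' _ y⟩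
  · exact sup_eq_left.mpr le_top

lemma embedded_singleton (n : ℕ) (i : Fin n) : IsEmbedded n ({i}, ⊥) := by
  have hb : modp n ({i} : Set (Fin n)) = ⊥ :=
    modp_eq_bot_of_subsingleton Set.subsingleton_singleton
  unfold IsEmbedded EmbClosure
  refine Prod.ext ?_ ?_
  · ext y
    simp only [Set.mem_setOf_eq, hb, sup_idem, Set.mem_singleton_iff]
    constructor
    · rintro ⟨a, ha, hrel⟩
      subst ha
      have h2 : (⊥ ⊔ modp n {a} : Setoid (Fin n)) y a := hrel
      rw [hb, sup_idem] at h2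
      exact h2
    · rintro rfl
      exact ⟨y, rfl, Setoid.refl' _ y⟩
  · simp [hb]

/-- The bottom element `(∅, P_⊥)` of `ℰ^N`. -/
def botE (n : ℕ) : Emb n := ⟨(∅, ⊥), embedded_empty n ⊥⟩

/-- The top element `(N, P^⊤)` of `ℰ^N`. -/
def topE (n : ℕ) : Emb n := ⟨(Set.univ, ⊤), embedded_univ_top n⟩

/-- The atom `({i}, P_⊥)` of `ℰ^N`. -/
def atomS (n : ℕ) (i : Fin n) : Emb n := ⟨({i}, ⊥), embedded_singleton n i⟩

/-- The atom `(∅, [ij])` of `ℰ^N`, where `[ij]` is the atom of the partition lattice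
whose unique non-singleton block is the pair `{i, j}`. -/
def atomP (n : ℕ) (i j : Fin n) : Emb n := ⟨(∅, modp n {i, j}), embedded_empty n _⟩

/-- A pair is an atom candidate: of the form `({i},P_⊥)` or `(∅,[ij])` with `i ≠ j`. -/
def IsAtomPair (n : ℕ) (a : XN n) : Prop :=
  (∃ i : Fin n, a = ({i}, ⊥)) ∨ ∃ i j : Fin n, i ≠ j ∧ a = (∅, modp n {i, j})

/-- The number of blocks `|P|` of a partition. -/
noncomputable def numBlocks {α : Type*} (P : Setoid α) : ℕ := P.classes.ncard

/-- The rank function `r(A,P) = (n − |P|) + min{|A|,1}` of `ℰ^N`. -/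
noncomputable def erank (n : ℕ) (x : XN n) : ℕ := (n - numBlocks x.2) + min x.1.ncard 1

/-- The partition `Q^S` of `S` induced by a partition `Q` of `N`. -/
def indPart {n : ℕ} (S : Set (Fin n)) (Q : Setoid (Fin n)) : Setoid S :=
  Setoid.comap Subtype.val Q

/-- `mu` is the Möbius function of the (finite) poset `α`. -/
def IsMobius {α : Type*} [PartialOrder α] (mu : α → α → ℤ) : Prop :=
  (∀ x, mu x x = 1) ∧
  (∀ x y, ¬x ≤ y → mu x y = 0) ∧
  (∀ x y, x < y → mu x y = -∑ᶠ z ∈ Set.Ico x y, mu x z)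

/-!
An element `(B, R)` of the interval has `Q ≤ R ≤ P` and `B ⊆ A`. As `A` is a union of blocks of
`P`, `R` joins no point of `A` to a point of `Aᶜ`, so it is determined by its trace on `A`, which
is coarser than `Q^A` and so is a partition of the `|Q^A|` blocks of `Q^A`, and by its trace
`R^{Aᶜ} ∈ [Q^{Aᶜ}, P^{Aᶜ}]`; the set `B`, a union of blocks of `Q^A`, is read off on those blocks
too. This gives the isomorphism. The Möbius identity follows because the Möbius function is
invariant under isomorphism, restricts to intervals and is multiplicative on products.
-/

lemma OrderIso.apply_eq_of_isBot {α β : Type*} [PartialOrder α] [PartialOrder β] (e : α ≃o β)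
    {a : α} {b : β} (ha : IsBot a) (hb : IsBot b) : e a = b :=
  le_antisymm (e.le_symm_apply.mp (ha _)) (hb _)

lemma OrderIso.apply_eq_of_isTop {α β : Type*} [PartialOrder α] [PartialOrder β] (e : α ≃o β)
    {a : α} {b : β} (ha : IsTop a) (hb : IsTop b) : e a = b :=
  le_antisymm (hb _) (e.symm_apply_le.mp (ha _))

lemma finsum_mem_prod_mul {α β R : Type*} [CommSemiring R] {s : Set α} {t : Set β}
    (hs : s.Finite) (ht : t.Finite) (f : α → R) (g : β → R) :
    ∑ᶠ w ∈ s ×ˢ t, f w.1 * g w.2 = (∑ᶠ a ∈ s, f a) * ∑ᶠ b ∈ t, g b := by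
  classical
  rw [← hs.coe_toFinset, ← ht.coe_toFinset, ← Finset.coe_product, finsum_mem_coe_finset,
    finsum_mem_coe_finset, finsum_mem_coe_finset, Finset.sum_product, Finset.sum_mul_sum]

namespace IsMobius

variable {α β : Type*} [PartialOrder α] [PartialOrder β]

lemma finsum_Icc_of_lt [Finite α] {mu : α → α → ℤ} (h : IsMobius mu) {x y : α} (hxy : x < y) :
    ∑ᶠ z ∈ Set.Icc x y, mu x z = 0 := by
  rw [← Set.Ico_union_right hxy.le,
    finsum_mem_union (by simp) (Set.toFinite _) (Set.toFinite _), finsum_mem_singleton,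
    h.2.2 x y hxy, add_neg_cancel]

lemma unique [Finite α] {mu mu' : α → α → ℤ} (h : IsMobius mu) (h' : IsMobius mu') :
    mu = mu' := by
  funext x y
  induction y using WellFoundedLT.induction with
  | ind y ih =>
    by_cases hxy : x ≤ y
    · rcases hxy.eq_or_lt with rfl | hlt
      · rw [h.1, h'.1]
      · rw [h.2.2 x y hlt, h'.2.2 x y hlt]
        exact congrArg Neg.neg (finsum_mem_congr rfl fun z hz => ih z hz.2)
    · rw [h.2.1 x y hxy, h'.2.1 x y hxy]

lemma comp_orderEmbedding {mu : α → α → ℤ} (h : IsMobius mu) (f : β ↪o α)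
    (hf : (Set.range f).OrdConnected) : IsMobius fun u v => mu (f u) (f v) := by
  refine ⟨fun u => h.1 _, fun u v huv => h.2.1 _ _ (by rwa [f.le_iff_le]), fun u v huv => ?_⟩
  have himage : Set.Ico (f u) (f v) = f '' Set.Ico u v := by
    ext z
    constructor
    · rintro ⟨hz₁, hz₂⟩
      obtain ⟨w, rfl⟩ := hf.out (Set.mem_range_self u) (Set.mem_range_self v) ⟨hz₁, hz₂.le⟩
      exact ⟨w, ⟨f.le_iff_le.mp hz₁, f.lt_iff_lt.mp hz₂⟩, rfl⟩
    · rintro ⟨w, ⟨hw₁, hw₂⟩, rfl⟩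
      exact ⟨f.le_iff_le.mpr hw₁, f.lt_iff_lt.mpr hw₂⟩
  dsimp only
  rw [h.2.2 _ _ (f.lt_iff_lt.mpr huv), himage, finsum_mem_image f.injective.injOn]

lemma restrict {mu : α → α → ℤ} (h : IsMobius mu) (s : Set α) [s.OrdConnected] :
    IsMobius fun u v : s => mu u v :=
  h.comp_orderEmbedding (OrderEmbedding.subtype (· ∈ s)) <| by
    rw [OrderEmbedding.coe_subtype, Subtype.range_coe]
    infer_instance

lemma comp_orderIso {mu : α → α → ℤ} (h : IsMobius mu) (e : β ≃o α) :
    IsMobius fun u v => mu (e u) (e v) :=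
  h.comp_orderEmbedding e.toOrderEmbedding (by simpa using Set.ordConnected_univ)

lemma prod [Finite α] [Finite β] {mu : α → α → ℤ} {mu' : β → β → ℤ} (h : IsMobius mu)
    (h' : IsMobius mu') : IsMobius fun u v : α × β => mu u.1 v.1 * mu' u.2 v.2 := by
  refine ⟨fun u => by simp [h.1, h'.1], fun u v huv => ?_, fun u v huv => ?_⟩
  · dsimp only
    rcases not_and_or.mp huv with h₁ | h₂
    · rw [h.2.1 _ _ h₁, zero_mul]
    · rw [h'.2.1 _ _ h₂, mul_zero]
  · have hsum : ∑ᶠ w ∈ Set.Icc u v, mu u.1 w.1 * mu' u.2 w.2 = 0 := by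
      rw [Set.Icc_prod_eq, finsum_mem_prod_mul (Set.toFinite _) (Set.toFinite _)]
      rcases Prod.lt_iff.mp huv with ⟨h₁, -⟩ | ⟨-, h₂⟩
      · rw [h.finsum_Icc_of_lt h₁, zero_mul]
      · rw [h'.finsum_Icc_of_lt h₂, mul_zero]
    rw [← Set.Ico_union_right huv.le,
      finsum_mem_union (by simp) (Set.toFinite _) (Set.toFinite _), finsum_mem_singleton] at hsum
    dsimp only
    linarith

lemma apply_eq_mul_of_orderIso_Icc {γ : Type*} [PartialOrder γ] [Finite β] [Finite γ]
    {mu : α → α → ℤ} {mu₂ : β → β → ℤ} {mu₃ : γ → γ → ℤ} (h : IsMobius mu)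
    (h₂ : IsMobius mu₂) (h₃ : IsMobius mu₃) {a b : α} (hab : a ≤ b) {c d : γ}
    (e : Set.Icc a b ≃o β × Set.Icc c d) {b₀ t₀ : β} (hb₀ : IsBot b₀) (ht₀ : IsTop t₀) :
    mu a b = mu₂ b₀ t₀ * mu₃ c d := by
  have hcd : c ≤ d := (e ⟨a, le_rfl, hab⟩).2.2.1.trans (e ⟨a, le_rfl, hab⟩).2.2.2
  have hbot : e ⟨a, le_rfl, hab⟩ = (b₀, ⟨c, le_rfl, hcd⟩) :=
    e.apply_eq_of_isBot (fun z => z.2.1) (hb₀.prodMk fun z => z.2.1)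
  have htop : e ⟨b, hab, le_rfl⟩ = (t₀, ⟨d, hcd, le_rfl⟩) :=
    e.apply_eq_of_isTop (fun z => z.2.2) (ht₀.prodMk fun z => z.2.2)
  have key := congrFun₂ (((h.restrict _).comp_orderIso e.symm).unique
    (h₂.prod (h₃.restrict (Set.Icc c d)))) (e ⟨a, le_rfl, hab⟩) (e ⟨b, hab, le_rfl⟩)
  simp only [OrderIso.symm_apply_apply] at key
  rwa [hbot, htop] at key

end IsMobius

instance {α : Type*} [Finite α] : Finite (Setoid α) :=
  Finite.of_injective (fun r : Setoid α => ⇑r) fun _ _ h => Setoid.eq_iff_rel_eq.mpr h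

lemma exists_surjective_fin_numBlocks {α : Type*} [Finite α] (r : Setoid α) :
    ∃ f : α → Fin (numBlocks r), Function.Surjective f ∧ ∀ a b, f a = f b ↔ r a b := by
  have hcard : Nat.card (Quotient r) = numBlocks r := by
    rw [numBlocks, ← Nat.card_coe_set_eq]
    exact Nat.card_congr r.quotientEquivClasses
  let σ := Finite.equivFinOfCardEq hcard
  exact ⟨σ ∘ Quotient.mk r, σ.surjective.comp Quotient.mk_surjective,
    fun a b => σ.injective.eq_iff.trans Quotient.eq⟩

section Embedded

variable {n m : ℕ}

lemma isEmbedded_iff {B : Set (Fin n)} {R : Setoid (Fin n)} :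
    IsEmbedded n (B, R) ↔ (∀ x ∈ B, ∀ y ∈ B, R x y) ∧ ∀ x ∈ B, ∀ y, R y x → y ∈ B := by
  have hmodp : modp n B ≤ R ↔ ∀ x ∈ B, ∀ y ∈ B, R x y :=
    ⟨fun h x hx y hy => h (Or.inr ⟨hx, hy⟩),
      fun h x y => by rintro (rfl | ⟨hx, hy⟩) <;> [exact R.refl' x; exact h x hx y hy]⟩
  unfold IsEmbedded EmbClosure
  rw [Prod.ext_iff]
  dsimp only
  rw [sup_eq_left, ← hmodp]
  constructor
  · rintro ⟨hB, hle⟩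
    refine ⟨hle, fun x hx y hyx => ?_⟩
    rw [sup_eq_left.mpr hle] at hB
    exact hB ▸ (⟨x, hx, hyx⟩ : ∃ x ∈ B, R y x)
  · rintro ⟨hle, hsat⟩
    refine ⟨?_, hle⟩
    rw [sup_eq_left.mpr hle]
    ext y
    exact ⟨fun ⟨x, hx, hyx⟩ => hsat x hx y hyx, fun hy => ⟨y, hy, R.refl' y⟩⟩

lemma isBot_botE : IsBot (botE n) := fun _ => ⟨Set.empty_subset _, bot_le⟩

lemma isTop_topE : IsTop (topE n) := fun _ => ⟨Set.subset_univ _, le_top⟩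

lemma isEmbedded_comap (g : Fin m → Fin n) {B : Set (Fin n)} {R : Setoid (Fin n)}
    (h : IsEmbedded n (B, R)) : IsEmbedded m (g ⁻¹' B, R.comap g) := by
  obtain ⟨hblock, hsat⟩ := isEmbedded_iff.mp h
  exact isEmbedded_iff.mpr ⟨fun i hi j hj => hblock _ hi _ hj, fun i hi j hji => hsat _ hi _ hji⟩

lemma indPart_mono {S : Set (Fin n)} {R R' : Setoid (Fin n)} (h : R ≤ R') :
    indPart S R ≤ indPart S R' :=
  fun _ _ hxy => h hxy

end Embedded

section IntervalIso

variable {n m : ℕ} {A : Set (Fin n)} {Q P : Setoid (Fin n)} {f : A → Fin m}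

variable (f) in
def pullSet (B : Set (Fin m)) : Set (Fin n) := {x | ∃ hx : x ∈ A, f ⟨x, hx⟩ ∈ B}

variable (f) in
def glue (R : Setoid (Fin m)) (S : Setoid ↥Aᶜ) : Setoid (Fin n) where
  r x y := (∃ hx : x ∈ A, ∃ hy : y ∈ A, R (f ⟨x, hx⟩) (f ⟨y, hy⟩)) ∨
    ∃ hx : x ∈ Aᶜ, ∃ hy : y ∈ Aᶜ, S ⟨x, hx⟩ ⟨y, hy⟩
  iseqv := by
    refine ⟨fun x => ?_, ?_, ?_⟩
    · by_cases hx : x ∈ A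
      · exact Or.inl ⟨hx, hx, R.refl' _⟩
      · exact Or.inr ⟨hx, hx, S.refl' _⟩
    · rintro x y (⟨hx, hy, h⟩ | ⟨hx, hy, h⟩)
      · exact Or.inl ⟨hy, hx, R.symm' h⟩
      · exact Or.inr ⟨hy, hx, S.symm' h⟩
    · rintro x y z (⟨hx, hy, h⟩ | ⟨hx, hy, h⟩) (⟨hy', hz, h'⟩ | ⟨hy', hz, h'⟩)
      · exact Or.inl ⟨hx, hz, R.trans' h h'⟩
      · exact absurd hy hy'
      · exact absurd hy' hy
      · exact Or.inr ⟨hx, hz, S.trans' h h'⟩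

/-- When `f` enumerates the blocks of `Q^A`, a representative of each block. -/
noncomputable def blockRep (hsurj : Function.Surjective f) (i : Fin m) : Fin n :=
  ↑(Function.surjInv hsurj i)

lemma blockRep_mem (hsurj : Function.Surjective f) (i : Fin m) : blockRep hsurj i ∈ A :=
  (Function.surjInv hsurj i).2

lemma apply_blockRep (hsurj : Function.Surjective f) (i : Fin m) :
    f ⟨blockRep hsurj i, blockRep_mem hsurj i⟩ = i :=
  Function.surjInv_eq hsurj i

lemma blockRep_rel (hf : ∀ a b, f a = f b ↔ Q a b) (hsurj : Function.Surjective f) (a : A) :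
    Q (blockRep hsurj (f a)) a :=
  (hf _ _).mp (apply_blockRep hsurj (f a))

lemma isEmbedded_glue {B : Set (Fin m)} {R : Setoid (Fin m)} (S : Setoid ↥Aᶜ)
    (h : IsEmbedded m (B, R)) : IsEmbedded n (pullSet f B, glue f R S) := by
  obtain ⟨hblock, hsat⟩ := isEmbedded_iff.mp h
  refine isEmbedded_iff.mpr
    ⟨fun x ⟨hx, hfx⟩ y ⟨hy, hfy⟩ => Or.inl ⟨hx, hy, hblock _ hfx _ hfy⟩, ?_⟩
  rintro x ⟨hx, hfx⟩ y (⟨hy, _, hyx⟩ | ⟨_, hx', _⟩)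
  · exact ⟨hy, hsat _ hfx _ hyx⟩
  · exact absurd hx hx'

lemma pullSet_subset (B : Set (Fin m)) : pullSet f B ⊆ A := fun _ hx => hx.1

lemma pullSet_mono {B B' : Set (Fin m)} (h : B ⊆ B') : pullSet f B ⊆ pullSet f B' :=
  fun _ ⟨hx, hfx⟩ => ⟨hx, h hfx⟩

lemma glue_mono {R R' : Setoid (Fin m)} {S S' : Setoid ↥Aᶜ} (hR : R ≤ R') (hS : S ≤ S') :
    glue f R S ≤ glue f R' S' := by
  rintro x y (⟨hx, hy, h⟩ | ⟨hx, hy, h⟩)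
  · exact Or.inl ⟨hx, hy, hR h⟩
  · exact Or.inr ⟨hx, hy, hS h⟩

lemma le_glue (hf : ∀ a b, f a = f b ↔ Q a b) (hP : IsEmbedded n (A, P)) (hQP : Q ≤ P)
    (R : Setoid (Fin m)) {S : Setoid ↥Aᶜ} (hS : indPart Aᶜ Q ≤ S) : Q ≤ glue f R S := by
  have hsat := (isEmbedded_iff.mp hP).2
  intro x y hxy
  by_cases hx : x ∈ A
  · have hy : y ∈ A := hsat x hx y (P.symm' (hQP hxy))
    exact Or.inl ⟨hx, hy, by rw [(hf ⟨x, hx⟩ ⟨y, hy⟩).mpr hxy]⟩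
  · have hy : y ∉ A := fun hy => hx (hsat y hy x (hQP hxy))
    exact Or.inr ⟨hx, hy, hS hxy⟩

lemma glue_le (hP : IsEmbedded n (A, P)) (R : Setoid (Fin m)) {S : Setoid ↥Aᶜ}
    (hS : S ≤ indPart Aᶜ P) : glue f R S ≤ P := by
  rintro x y (⟨hx, hy, _⟩ | ⟨_, _, h⟩)
  · exact (isEmbedded_iff.mp hP).1 x hx y hy
  · exact hS h

lemma preimage_blockRep_pullSet (hsurj : Function.Surjective f) (B : Set (Fin m)) :
    blockRep hsurj ⁻¹' pullSet f B = B := by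
  ext i
  exact ⟨fun ⟨_, hi⟩ => apply_blockRep hsurj i ▸ hi,
    fun hi => ⟨blockRep_mem hsurj i, (apply_blockRep hsurj i).symm ▸ hi⟩⟩

lemma comap_blockRep_glue (hsurj : Function.Surjective f) (R : Setoid (Fin m))
    (S : Setoid ↥Aᶜ) : (glue f R S).comap (blockRep hsurj) = R := by
  ext i j
  rw [Setoid.comap_rel]
  constructor
  · rintro (⟨_, _, h⟩ | ⟨hi, _, _⟩)
    · rwa [apply_blockRep hsurj, apply_blockRep hsurj] at h
    · exact absurd (blockRep_mem hsurj i) hi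
  · intro h
    refine Or.inl ⟨blockRep_mem hsurj i, blockRep_mem hsurj j, ?_⟩
    rwa [apply_blockRep hsurj, apply_blockRep hsurj]

lemma indPart_compl_glue (R : Setoid (Fin m)) (S : Setoid ↥Aᶜ) :
    indPart Aᶜ (glue f R S) = S := by
  ext x y
  constructor
  · rintro (⟨hx, _, _⟩ | ⟨_, _, h⟩)
    · exact absurd hx x.2
    · exact h
  · exact fun h => Or.inr ⟨x.2, y.2, h⟩

lemma pullSet_preimage_blockRep (hf : ∀ a b, f a = f b ↔ Q a b)
    (hsurj : Function.Surjective f) {B : Set (Fin n)} {R : Setoid (Fin n)} (hQR : Q ≤ R)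
    (h : IsEmbedded n (B, R)) (hBA : B ⊆ A) : pullSet f (blockRep hsurj ⁻¹' B) = B := by
  ext x
  constructor
  · rintro ⟨hx, hrep⟩
    exact (isEmbedded_iff.mp h).2 _ hrep x (R.symm' (hQR (blockRep_rel hf hsurj ⟨x, hx⟩)))
  · exact fun hx => ⟨hBA hx, (isEmbedded_iff.mp h).2 x hx _ (hQR (blockRep_rel hf hsurj _))⟩

/-- `R` is recovered from its trace on the block representatives and on `Aᶜ`, because it is
coarser than `Q` and does not join `A` to `Aᶜ`. -/
lemma glue_comap_blockRep (hf : ∀ a b, f a = f b ↔ Q a b) (hsurj : Function.Surjective f)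
    (hP : IsEmbedded n (A, P)) {R : Setoid (Fin n)} (hQR : Q ≤ R) (hRP : R ≤ P) :
    glue f (R.comap (blockRep hsurj)) (indPart Aᶜ R) = R := by
  have hsat := (isEmbedded_iff.mp hP).2
  ext x y
  constructor
  · rintro (⟨hx, hy, h⟩ | ⟨_, _, h⟩)
    · exact R.trans' (R.trans' (R.symm' (hQR (blockRep_rel hf hsurj ⟨x, hx⟩))) h)
        (hQR (blockRep_rel hf hsurj ⟨y, hy⟩))
    · exact h
  · intro hxy
    by_cases hx : x ∈ A
    · have hy : y ∈ A := hsat x hx y (P.symm' (hRP hxy))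
      refine Or.inl ⟨hx, hy, ?_⟩
      exact R.trans' (R.trans' (hQR (blockRep_rel hf hsurj ⟨x, hx⟩)) hxy)
        (R.symm' (hQR (blockRep_rel hf hsurj ⟨y, hy⟩)))
    · exact Or.inr ⟨hx, fun hy => hx (hsat y hy x (hRP hxy)), hxy⟩

noncomputable def intervalOrderIso (hf : ∀ a b, f a = f b ↔ Q a b)
    (hsurj : Function.Surjective f) (hQ : IsEmbedded n (∅, Q)) (hP : IsEmbedded n (A, P))
    (hQP : Q ≤ P) :
    Set.Icc (⟨(∅, Q), hQ⟩ : Emb n) ⟨(A, P), hP⟩ ≃o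
      Emb m × Set.Icc (indPart Aᶜ Q) (indPart Aᶜ P) :=
  Equiv.toOrderIso
    { toFun := fun z =>
        (⟨(blockRep hsurj ⁻¹' z.1.1.1, z.1.1.2.comap (blockRep hsurj)), isEmbedded_comap _ z.1.2⟩,
          ⟨indPart Aᶜ z.1.1.2, indPart_mono z.2.1.2, indPart_mono z.2.2.2⟩)
      invFun := fun w =>
        ⟨⟨(pullSet f w.1.1.1, glue f w.1.1.2 w.2.1), isEmbedded_glue _ w.1.2⟩,
          ⟨Set.empty_subset _, le_glue hf hP hQP _ w.2.2.1⟩, pullSet_subset _, glue_le hP _ w.2.2.2⟩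
      left_inv := fun z => Subtype.ext <| Subtype.ext <| Prod.ext
        (pullSet_preimage_blockRep hf hsurj z.2.1.2 z.1.2 z.2.2.1)
        (glue_comap_blockRep hf hsurj hP z.2.1.2 z.2.2.2)
      right_inv := fun _ => Prod.ext
        (Subtype.ext <| Prod.ext (preimage_blockRep_pullSet hsurj _)
          (comap_blockRep_glue hsurj _ _))
        (Subtype.ext <| indPart_compl_glue _ _) }
    (fun _ _ h => ⟨⟨Set.preimage_mono h.1, fun _ _ hij => h.2 hij⟩, indPart_mono h.2⟩)
    (fun _ _ h => ⟨pullSet_mono h.1.1, glue_mono h.1.2 h.2⟩)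

end IntervalIso

theorem interval_empty_subset_general (n : ℕ) (A : Set (Fin n))
    (Q P : Setoid (Fin n)) (hQ : IsEmbedded n (∅, Q)) (hP : IsEmbedded n (A, P))
    (hle : ((∅, Q) : XN n) ≤ (A, P)) :
    Nonempty ({z : Emb n // (⟨(∅, Q), hQ⟩ : Emb n) ≤ z ∧ z ≤ ⟨(A, P), hP⟩} ≃o
        Emb (numBlocks (indPart A Q)) × Set.Icc (indPart Aᶜ Q) (indPart Aᶜ P)) ∧
    ∀ (mu1 : Emb n → Emb n → ℤ)
      (mu2 : Emb (numBlocks (indPart A Q)) → Emb (numBlocks (indPart A Q)) → ℤ)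
      (mu3 : Setoid ↥Aᶜ → Setoid ↥Aᶜ → ℤ),
      IsMobius mu1 → IsMobius mu2 → IsMobius mu3 →
      mu1 ⟨(∅, Q), hQ⟩ ⟨(A, P), hP⟩ =
        mu2 (botE _) (topE _) * mu3 (indPart Aᶜ Q) (indPart Aᶜ P) := by
  obtain ⟨f, hsurj, hf⟩ := exists_surjective_fin_numBlocks (indPart A Q)
  let e := intervalOrderIso hf hsurj hQ hP hle.2
  exact ⟨⟨e⟩, fun _ _ _ h₁ h₂ h₃ =>
    h₁.apply_eq_mul_of_orderIso_Icc h₂ h₃ hle e isBot_botE isTop_topE⟩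

theorem interval_empty_subset (n : ℕ) (hn : 1 ≤ n) (A : Set (Fin n)) (hA : A ≠ ∅)
    (Q P : Setoid (Fin n)) (hQ : IsEmbedded n (∅, Q)) (hP : IsEmbedded n (A, P))
    (hle : ((∅, Q) : XN n) ≤ (A, P)) :
    Nonempty ({z : Emb n // (⟨(∅, Q), hQ⟩ : Emb n) ≤ z ∧ z ≤ ⟨(A, P), hP⟩} ≃o
        Emb (numBlocks (indPart A Q)) × Set.Icc (indPart Aᶜ Q) (indPart Aᶜ P)) ∧
    ∀ (mu1 : Emb n → Emb n → ℤ)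
      (mu2 : Emb (numBlocks (indPart A Q)) → Emb (numBlocks (indPart A Q)) → ℤ)
      (mu3 : Setoid ↥Aᶜ → Setoid ↥Aᶜ → ℤ),
      IsMobius mu1 → IsMobius mu2 → IsMobius mu3 →
      mu1 ⟨(∅, Q), hQ⟩ ⟨(A, P), hP⟩ =
        mu2 (botE _) (topE _) * mu3 (indPart Aᶜ Q) (indPart Aᶜ P) :=
  interval_empty_subset_general n A Q P hQ hP hle
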